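/- arXiv:1806.10780 — 3 statements merged into one kernel-verified Lean document; each statement's English description precedes it below -/
import Mathlib

section
/- Let I be a prime ideal of the polynomial ring ℂ[z₁,…,z_N] (the ideal of an irreducible affine variety V ⊆ ℂ^N). Then there exist an integer 0 ≤ m ≤ N and an invertible ℂ-linear map L : ℂ^N → ℂ^N such that, writing the new coordinates as z = (x₁,…,x_m, y₁,…,y_{N−m}) and setting J = L*(I) = { p ∘ L : p ∈ I }, the canonical ring homomorphism ℂ[x₁,…,x_m] → ℂ[x₁,…,x_m,y₁,…,y_{N−m}]/J induced by the inclusion of polynomial rings is injective and finite (i.e., it exhibits the quotient ring as a finitely generated module over ℂ[x₁,…,x_m]). -/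
open MvPolynomial

/-- For an invertible `ℂ`-linear map `L : ℂ^N → ℂ^N`, the induced ring (algebra)
endomorphism of `ℂ[z₁,…,z_N]` sending `p(z)` to `p(L(z))`. -/
noncomputable def linearPullback (N : ℕ) (L : (Fin N → ℂ) ≃ₗ[ℂ] (Fin N → ℂ)) :
    MvPolynomial (Fin N) ℂ →ₐ[ℂ] MvPolynomial (Fin N) ℂ :=
  MvPolynomial.aeval fun i : Fin N =>
    ∑ j : Fin N, MvPolynomial.C (L (Pi.single j 1) i) * MvPolynomial.X j

namespace NoetherAux

variable {N : ℕ}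

lemma linear_apply_eq_sum (L : (Fin N → ℂ) ≃ₗ[ℂ] (Fin N → ℂ)) (z : Fin N → ℂ) (i : Fin N) :
    L z i = ∑ j, L (Pi.single j 1) i * z j := by
  have hz : z = ∑ j, z j • (Pi.single j (1 : ℂ) : Fin N → ℂ) := by
    funext k
    simp [Finset.sum_apply, Pi.single_apply]
  calc L z i = L (∑ j, z j • (Pi.single j (1 : ℂ) : Fin N → ℂ)) i := by rw [← hz]
    _ = ∑ j, z j • L (Pi.single j (1 : ℂ)) i := by
        rw [map_sum]
        simp [Finset.sum_apply]
    _ = ∑ j, L (Pi.single j 1) i * z j := by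
        simp [smul_eq_mul, mul_comm]

lemma eval_linearPullback (L : (Fin N → ℂ) ≃ₗ[ℂ] (Fin N → ℂ))
    (p : MvPolynomial (Fin N) ℂ) (z : Fin N → ℂ) :
    eval z (linearPullback N L p) = eval (L z) p := by
  induction p using MvPolynomial.induction_on with
  | C a => simp [linearPullback]
  | add p q hp hq => simp [hp, hq]
  | mul_X p i hp =>
    have hX : eval z ((linearPullback N L) (X i)) = L z i := by
      rw [linear_apply_eq_sum L z i]
      simp [linearPullback]
    simp [map_mul, hp, hX]

lemma pullback_pullback (L L' : (Fin N → ℂ) ≃ₗ[ℂ] (Fin N → ℂ)) (p : MvPolynomial (Fin N) ℂ) :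
    linearPullback N L' (linearPullback N L p) = linearPullback N (L'.trans L) p :=
  MvPolynomial.funext fun z => by simp [eval_linearPullback]

lemma pullback_symm_pullback (L : (Fin N → ℂ) ≃ₗ[ℂ] (Fin N → ℂ)) (p : MvPolynomial (Fin N) ℂ) :
    linearPullback N L.symm (linearPullback N L p) = p :=
  MvPolynomial.funext fun z => by simp [eval_linearPullback]

lemma pullback_pullback_symm (L : (Fin N → ℂ) ≃ₗ[ℂ] (Fin N → ℂ)) (p : MvPolynomial (Fin N) ℂ) :
    linearPullback N L (linearPullback N L.symm p) = p :=
  MvPolynomial.funext fun z => by simp [eval_linearPullback]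

lemma pullback_bijective (L : (Fin N → ℂ) ≃ₗ[ℂ] (Fin N → ℂ)) :
    Function.Bijective (linearPullback N L) :=
  Function.bijective_iff_has_inverse.mpr
    ⟨linearPullback N L.symm, pullback_symm_pullback L, pullback_pullback_symm L⟩

noncomputable def pullbackRingEquiv (L : (Fin N → ℂ) ≃ₗ[ℂ] (Fin N → ℂ)) :
    MvPolynomial (Fin N) ℂ ≃+* MvPolynomial (Fin N) ℂ :=
  RingEquiv.ofRingHom (linearPullback N L).toRingHom (linearPullback N L.symm).toRingHom
    (RingHom.ext fun p => pullback_pullback_symm L p)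
    (RingHom.ext fun p => pullback_symm_pullback L p)

lemma totalDegree_pullback_le (L : (Fin N → ℂ) ≃ₗ[ℂ] (Fin N → ℂ)) (p : MvPolynomial (Fin N) ℂ) :
    (linearPullback N L p).totalDegree ≤ p.totalDegree := by
  conv_lhs => rw [p.as_sum]
  rw [map_sum]
  refine (totalDegree_finset_sum _ _).trans ?_
  apply Finset.sup_le
  intro e he
  rw [linearPullback, aeval_monomial]
  refine (totalDegree_mul _ _).trans ?_
  have h1 : (algebraMap ℂ (MvPolynomial (Fin N) ℂ) (coeff e p)).totalDegree = 0 := by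
    simp [algebraMap_eq]
  rw [h1, zero_add]
  rw [Finsupp.prod]
  refine (totalDegree_finset_prod _ _).trans ?_
  refine le_trans (Finset.sum_le_sum (g := fun i => e i) fun i (_ : i ∈ e.support) => ?_) ?_
  · refine (totalDegree_pow _ _).trans ?_
    have h2 : (∑ j, C (L (Pi.single j 1) i) * X j : MvPolynomial (Fin N) ℂ).totalDegree ≤ 1 := by
      refine (totalDegree_finset_sum _ _).trans ?_
      apply Finset.sup_le
      intro j _
      refine (totalDegree_mul _ _).trans ?_
      simp [totalDegree_C, totalDegree_X]
    calc e i * (∑ j, C (L (Pi.single j 1) i) * X j : MvPolynomial (Fin N) ℂ).totalDegree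
        ≤ e i * 1 := Nat.mul_le_mul_left _ h2
      _ = e i := Nat.mul_one _
  · exact le_totalDegree he

lemma eval_smul_of_isHomogeneous {σ : Type*} {H : MvPolynomial σ ℂ} {d : ℕ}
    (h : H.IsHomogeneous d) (t : ℂ) (v : σ → ℂ) :
    eval (t • v) H = t ^ d * eval v H := by
  rw [eval_eq, eval_eq, Finset.mul_sum]
  refine Finset.sum_congr rfl fun e he => ?_
  have hd : ∑ i ∈ e.support, e i = d := by
    have h1 := h (mem_support_iff.mp he)
    rw [← h1, Finsupp.weight_apply]
    simp [Finsupp.sum]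
  calc coeff e H * ∏ i ∈ e.support, (t • v) i ^ e i
      = coeff e H * ∏ i ∈ e.support, (t ^ e i * v i ^ e i) := by
        congr 1
        refine Finset.prod_congr rfl fun i _ => ?_
        rw [Pi.smul_apply, smul_eq_mul, mul_pow]
    _ = coeff e H * ((∏ i ∈ e.support, t ^ e i) * ∏ i ∈ e.support, v i ^ e i) := by
        rw [Finset.prod_mul_distrib]
    _ = t ^ d * (coeff e H * ∏ i ∈ e.support, v i ^ e i) := by
        rw [Finset.prod_pow_eq_pow_sum, hd]; ring

lemma eq_C_of_totalDegree_eq_zero {σ : Type*} {p : MvPolynomial σ ℂ}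
    (h : p.totalDegree = 0) : p = C (coeff 0 p) := by
  conv_lhs => rw [← sum_homogeneousComponent p, h]
  rw [Finset.sum_range_one, homogeneousComponent_zero]

/-- The shear `z ↦ (z₀ + c₀ z_n, …, z_{n-1} + c_{n-1} z_n, z_n)`. -/
noncomputable def shear {n : ℕ} (c : Fin n → ℂ) : (Fin (n+1) → ℂ) ≃ₗ[ℂ] (Fin (n+1) → ℂ) where
  toFun z := fun i => z i + (Fin.snoc c (0:ℂ) : Fin (n+1) → ℂ) i * z (Fin.last n)
  invFun z := fun i => z i - (Fin.snoc c (0:ℂ) : Fin (n+1) → ℂ) i * z (Fin.last n)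
  map_add' x y := by funext i; simp only [Pi.add_apply]; ring
  map_smul' t x := by funext i; simp only [Pi.smul_apply, smul_eq_mul, RingHom.id_apply]; ring
  left_inv z := by
    funext i
    simp only [Fin.snoc_last]
    ring
  right_inv z := by
    funext i
    simp only [Fin.snoc_last]
    ring

lemma shear_snoc_zero {n : ℕ} (c : Fin n → ℂ) (t : ℂ) :
    shear c (Fin.snoc 0 t) = t • (Fin.snoc c 1 : Fin (n+1) → ℂ) := by
  funext i
  refine Fin.lastCases ?_ (fun j => ?_) i
  · simp [shear, Fin.snoc_last]
  · simp only [shear, LinearEquiv.coe_mk, LinearMap.coe_mk, AddHom.coe_mk,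
      Fin.snoc_castSucc, Pi.smul_apply, smul_eq_mul]
    simp [Fin.snoc_castSucc, Fin.snoc_last]
    ring

lemma snoc_comp_castSucc {n : ℕ} {x : Fin n → ℂ} {t : ℂ} :
    (Fin.snoc x t : Fin (n+1) → ℂ) ∘ Fin.castSucc = x :=
  funext fun j => Fin.snoc_castSucc _ _ _

lemma snoc_restrict {n : ℕ} (w : Fin (n+1) → ℂ) :
    (Fin.snoc (w ∘ Fin.castSucc) (w (Fin.last n)) : Fin (n+1) → ℂ) = w := by
  funext i
  refine Fin.lastCases ?_ (fun j => ?_) i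
  · rw [Fin.snoc_last]
  · rw [Fin.snoc_castSucc]; rfl

/-- Extension of a linear automorphism of `ℂ^n` to `ℂ^{n+1}` fixing the last coordinate. -/
noncomputable def extEquiv {n : ℕ} (L : (Fin n → ℂ) ≃ₗ[ℂ] (Fin n → ℂ)) :
    (Fin (n+1) → ℂ) ≃ₗ[ℂ] (Fin (n+1) → ℂ) where
  toFun z := Fin.snoc (L (z ∘ Fin.castSucc)) (z (Fin.last n))
  invFun z := Fin.snoc (L.symm (z ∘ Fin.castSucc)) (z (Fin.last n))
  map_add' x y := by
    funext i
    have hc : (x + y) ∘ Fin.castSucc = x ∘ Fin.castSucc + y ∘ Fin.castSucc := rfl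
    refine Fin.lastCases ?_ (fun j => ?_) i
    · simp [Fin.snoc_last]
    · simp [Fin.snoc_castSucc, hc, map_add]
  map_smul' t x := by
    funext i
    have hc : (t • x) ∘ Fin.castSucc = t • (x ∘ Fin.castSucc) := rfl
    refine Fin.lastCases ?_ (fun j => ?_) i
    · simp [Fin.snoc_last]
    · simp [Fin.snoc_castSucc, hc, map_smul]
  left_inv z := by
    funext i
    refine Fin.lastCases ?_ (fun j => ?_) i
    · simp [Fin.snoc_last]
    · simp [Fin.snoc_castSucc, snoc_comp_castSucc]
  right_inv z := by
    funext i
    refine Fin.lastCases ?_ (fun j => ?_) i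
    · simp [Fin.snoc_last]
    · simp [Fin.snoc_castSucc, snoc_comp_castSucc]

lemma extEquiv_apply {n : ℕ} (L : (Fin n → ℂ) ≃ₗ[ℂ] (Fin n → ℂ)) (z : Fin (n+1) → ℂ) :
    extEquiv L z = Fin.snoc (L (z ∘ Fin.castSucc)) (z (Fin.last n)) := rfl

lemma extEquiv_symm {n : ℕ} (L : (Fin n → ℂ) ≃ₗ[ℂ] (Fin n → ℂ)) :
    (extEquiv L).symm = extEquiv L.symm := by
  ext z
  rfl

lemma extEquiv_snoc {n : ℕ} (L : (Fin n → ℂ) ≃ₗ[ℂ] (Fin n → ℂ)) (y : Fin n → ℂ) (t : ℂ) :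
    extEquiv L (Fin.snoc y t) = Fin.snoc (L y) t := by
  rw [extEquiv_apply, snoc_comp_castSucc, Fin.snoc_last]

/-- The isomorphism `ℂ[z₀,…,z_n] ≃ (ℂ[z₀,…,z_{n-1}])[X]` singling out the *last* variable. -/
noncomputable def Ee (n : ℕ) :
    MvPolynomial (Fin (n+1)) ℂ ≃ₐ[ℂ] Polynomial (MvPolynomial (Fin n) ℂ) :=
  (renameEquiv ℂ (finRotate (n+1))).trans (MvPolynomial.finSuccEquiv ℂ n)

lemma Ee_apply (n : ℕ) (s : MvPolynomial (Fin (n+1)) ℂ) :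
    Ee n s = MvPolynomial.finSuccEquiv ℂ n (rename (finRotate (n+1)) s) := rfl

lemma evalE (n : ℕ) (s : MvPolynomial (Fin (n+1)) ℂ) (y : Fin n → ℂ) (t : ℂ) :
    Polynomial.eval t (Polynomial.map (eval y) (Ee n s)) = eval (Fin.snoc y t) s := by
  rw [Ee_apply, ← eval_eq_eval_mv_eval', eval_rename]
  have hc : (Fin.cons t y : Fin (n+1) → ℂ) ∘ (finRotate (n+1)) = Fin.snoc y t :=
    funext fun i => (congrFun (Fin.snoc_eq_cons_rotate y t) i).symm
  rw [hc]

lemma polyR_ext {n : ℕ} {P Q : Polynomial (MvPolynomial (Fin n) ℂ)}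
    (h : ∀ (y : Fin n → ℂ) (t : ℂ),
      Polynomial.eval t (Polynomial.map (eval y) P) = Polynomial.eval t (Polynomial.map (eval y) Q)) :
    P = Q := by
  apply Polynomial.ext
  intro k
  apply MvPolynomial.funext
  intro y
  have h2 : Polynomial.map (eval y) P = Polynomial.map (eval y) Q := Polynomial.funext (h y)
  have h3 := congrArg (fun W => Polynomial.coeff W k) h2
  simpa [Polynomial.coeff_map] using h3

/-- Inverse to `Ee` as a ring hom. -/
noncomputable def zeta (n : ℕ) :
    Polynomial (MvPolynomial (Fin n) ℂ) →+* MvPolynomial (Fin (n+1)) ℂ :=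
  Polynomial.eval₂RingHom (rename (Fin.castSucc : Fin n → Fin (n+1))).toRingHom
    (X (Fin.last n))

lemma eval_comp_rename {n : ℕ} (w : Fin (n+1) → ℂ) :
    (eval w).comp (rename (Fin.castSucc : Fin n → Fin (n+1))).toRingHom
      = eval (w ∘ Fin.castSucc) :=
  RingHom.ext fun p => by
    have h := eval_rename (k := (Fin.castSucc : Fin n → Fin (n+1))) w p
    simpa using h

lemma zeta_Ee (n : ℕ) (s : MvPolynomial (Fin (n+1)) ℂ) : zeta n (Ee n s) = s := by
  apply MvPolynomial.funext
  intro w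
  rw [zeta, Polynomial.coe_eval₂RingHom, Polynomial.hom_eval₂, eval_comp_rename, eval_X,
    Polynomial.eval₂_eq_eval_map, evalE, snoc_restrict]

lemma natDegree_Ee_le (n : ℕ) (s : MvPolynomial (Fin (n+1)) ℂ) :
    (Ee n s).natDegree ≤ s.totalDegree := by
  rw [Ee_apply, natDegree_finSuccEquiv]
  exact (degreeOf_le_totalDegree _ 0).trans (totalDegree_rename_le _ _)

lemma exists_good_shear {n : ℕ} (f : MvPolynomial (Fin (n+1)) ℂ) (hf0 : f ≠ 0) :
    ∃ (c : Fin n → ℂ) (γ : ℂ), γ ≠ 0 ∧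
      (Ee n (linearPullback (n+1) (shear c) f)).natDegree ≤ f.totalDegree ∧
      (Ee n (linearPullback (n+1) (shear c) f)).coeff f.totalDegree = C γ := by
  set d := f.totalDegree with hd
  set H := homogeneousComponent d f with hH
  have hhom : H.IsHomogeneous d := homogeneousComponent_isHomogeneous d f
  have hH0 : H ≠ 0 := by
    obtain ⟨e, he, hed⟩ := Finset.exists_mem_eq_sup f.support
      (support_nonempty.mpr hf0) fun s => s.sum fun _ k => k
    intro h
    have hcoeff : coeff e H = coeff e f := by
      rw [hH, coeff_homogeneousComponent, if_pos]
      show e.degree = d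
      rw [hd]
      show e.degree = f.totalDegree
      rw [MvPolynomial.totalDegree, hed]
      simp [Finsupp.degree, Finsupp.sum]
      rfl
    rw [h, coeff_zero] at hcoeff
    exact (mem_support_iff.mp he) hcoeff.symm
  have hex : ∃ c : Fin n → ℂ, eval (Fin.snoc c 1) H ≠ 0 := by
    by_contra hall
    push_neg at hall
    apply hH0
    have hXH : (X (Fin.last n) : MvPolynomial (Fin (n+1)) ℂ) * H = 0 := by
      apply MvPolynomial.funext
      intro w
      rw [map_mul, eval_X, map_zero]
      rcases eq_or_ne (w (Fin.last n)) 0 with h0 | h0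
      · rw [h0, zero_mul]
      · set c := fun i => w (Fin.castSucc i) * (w (Fin.last n))⁻¹ with hc
        have hw : w = w (Fin.last n) • (Fin.snoc c 1 : Fin (n+1) → ℂ) := by
          funext i
          refine Fin.lastCases ?_ (fun j => ?_) i
          · simp [Fin.snoc_last]
          · simp only [Fin.snoc_castSucc, Pi.smul_apply, smul_eq_mul, hc]
            field_simp
        rw [hw, eval_smul_of_isHomogeneous hhom, hall c, mul_zero, mul_zero]
    rcases mul_eq_zero.mp hXH with h | h
    · exact absurd h (X_ne_zero _)
    · exact h
  obtain ⟨c, hγ⟩ := hex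
  set v : Fin (n+1) → ℂ := Fin.snoc c 1 with hv
  set γ := eval v H with hγdef
  set f₁ := linearPullback (n+1) (shear c) f with hf₁
  have hdf₁ : f₁.totalDegree ≤ d := totalDegree_pullback_le _ _
  have hnd : (Ee n f₁).natDegree ≤ d := (natDegree_Ee_le n f₁).trans hdf₁
  set V : Polynomial ℂ :=
    ∑ k ∈ Finset.range (d+1),
      Polynomial.C (eval v (homogeneousComponent k f)) * Polynomial.X ^ k with hVdef
  have hWV : Polynomial.map (eval (0 : Fin n → ℂ)) (Ee n f₁) = V := by
    apply Polynomial.funext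
    intro t
    rw [evalE, hf₁, eval_linearPullback, shear_snoc_zero]
    conv_lhs => rw [← sum_homogeneousComponent f]
    rw [map_sum, hVdef, Polynomial.eval_finset_sum]
    refine Finset.sum_congr rfl fun k _ => ?_
    rw [eval_smul_of_isHomogeneous (homogeneousComponent_isHomogeneous k f),
      Polynomial.eval_mul, Polynomial.eval_C, Polynomial.eval_pow, Polynomial.eval_X]
    ring
  have hVd : V.coeff d = γ := by
    rw [hVdef, Polynomial.finset_sum_coeff]
    simp only [Polynomial.coeff_C_mul, Polynomial.coeff_X_pow, mul_ite, mul_one, mul_zero]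
    rw [Finset.sum_ite_eq (Finset.range (d+1)) d
      (fun k => eval v (homogeneousComponent k f))]
    rw [if_pos (Finset.mem_range.mpr (Nat.lt_succ_self d))]
  have heval0 : eval (0 : Fin n → ℂ) ((Ee n f₁).coeff d) = γ := by
    rw [← Polynomial.coeff_map, hWV, hVd]
  have hne : (Ee n f₁).coeff d ≠ 0 := by
    intro h
    rw [h, map_zero] at heval0
    exact hγ heval0.symm
  have hconst : ((Ee n f₁).coeff d).totalDegree = 0 := by
    have h1 := totalDegree_coeff_finSuccEquiv_add_le (rename (finRotate (n+1)) f₁) d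
      (by rw [← Ee_apply]; exact hne)
    have h2 : (rename (finRotate (n+1)) f₁).totalDegree ≤ d :=
      (totalDegree_rename_le _ _).trans hdf₁
    rw [← Ee_apply] at h1
    omega
  refine ⟨c, γ, hγ, hnd, ?_⟩
  have hC := eq_C_of_totalDegree_eq_zero hconst
  rw [hC]
  congr 1
  rw [hC, eval_C] at heval0
  exact heval0

lemma pullback_ext_comp_rename {n : ℕ} (L' : (Fin n → ℂ) ≃ₗ[ℂ] (Fin n → ℂ)) :
    (linearPullback (n+1) (extEquiv L')).toRingHom.comp
        (rename (Fin.castSucc : Fin n → Fin (n+1))).toRingHom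
      = (rename (Fin.castSucc : Fin n → Fin (n+1))).toRingHom.comp
        (linearPullback n L').toRingHom := by
  apply RingHom.ext
  intro p
  apply MvPolynomial.funext
  intro z
  simp only [RingHom.comp_apply, AlgHom.toRingHom_eq_coe, RingHom.coe_coe]
  rw [eval_linearPullback, eval_rename, eval_rename, eval_linearPullback]
  congr 1
  rw [extEquiv_apply, snoc_comp_castSucc]

lemma map_eq_comap_inv {A : Type*} [CommRing A] {φ φ' : A →+* A}
    (h1 : ∀ x, φ' (φ x) = x) (h2 : ∀ x, φ (φ' x) = x) (K : Ideal A) :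
    K.map φ = K.comap φ' := by
  apply le_antisymm
  · rw [Ideal.map_le_iff_le_comap]
    intro x hx
    rw [Ideal.mem_comap, Ideal.mem_comap, h1]
    exact hx
  · intro x hx
    rw [Ideal.mem_comap] at hx
    have hx2 : φ (φ' x) ∈ K.map φ := Ideal.mem_map_of_mem _ hx
    rwa [h2] at hx2

def Goal (N : ℕ) (I : Ideal (MvPolynomial (Fin N) ℂ)) : Prop :=
  ∃ (m : ℕ) (hm : m ≤ N) (L : (Fin N → ℂ) ≃ₗ[ℂ] (Fin N → ℂ)),
    Function.Injective
      ((Ideal.Quotient.mk (I.map (linearPullback N L).toRingHom)).comp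
        (MvPolynomial.rename (Fin.castLE hm)).toRingHom) ∧
    ((Ideal.Quotient.mk (I.map (linearPullback N L).toRingHom)).comp
        (MvPolynomial.rename (Fin.castLE hm)).toRingHom).Finite

lemma goal_bot (N : ℕ) : Goal N ⊥ := by
  refine ⟨N, le_refl N, LinearEquiv.refl ℂ _, ?_⟩
  have hmap : ((⊥ : Ideal (MvPolynomial (Fin N) ℂ)).map
      (linearPullback N (LinearEquiv.refl ℂ _)).toRingHom) = ⊥ := Ideal.map_bot
  suffices key : ∀ J : Ideal (MvPolynomial (Fin N) ℂ), J = ⊥ →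
      Function.Injective ((Ideal.Quotient.mk J).comp (rename (Fin.castLE (le_refl N))).toRingHom) ∧
      ((Ideal.Quotient.mk J).comp (rename (Fin.castLE (le_refl N))).toRingHom).Finite from key _ hmap
  rintro J rfl
  have hcast : (Fin.castLE (le_refl N)) = (id : Fin N → Fin N) :=
    funext fun x => Fin.ext rfl
  have hrid : ∀ p : MvPolynomial (Fin N) ℂ, rename (Fin.castLE (le_refl N)) p = p := by
    intro p
    rw [hcast, rename_id]
    rfl
  constructor
  · intro a b hab
    have h1 : Ideal.Quotient.mk (⊥ : Ideal (MvPolynomial (Fin N) ℂ))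
        (rename (Fin.castLE (le_refl N)) a)
        = Ideal.Quotient.mk ⊥ (rename (Fin.castLE (le_refl N)) b) := hab
    rw [Ideal.Quotient.mk_eq_mk_iff_sub_mem, Ideal.mem_bot, sub_eq_zero] at h1
    rw [hrid, hrid] at h1
    exact h1
  · apply RingHom.Finite.of_surjective
    intro x
    obtain ⟨p, rfl⟩ := Ideal.Quotient.mk_surjective x
    exact ⟨p, by simp [hrid p]⟩

lemma goal_step {n : ℕ} (I : Ideal (MvPolynomial (Fin (n+1)) ℂ)) (hItop : I ≠ ⊤)
    (hIbot : I ≠ ⊥)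
    (ih : ∀ I' : Ideal (MvPolynomial (Fin n) ℂ), I' ≠ ⊤ → Goal n I') :
    Goal (n+1) I := by
  obtain ⟨f, hfI, hf0⟩ := Submodule.exists_mem_ne_zero_of_ne_bot hIbot
  obtain ⟨c, γ, hγ, hnd, hcoe⟩ := exists_good_shear f hf0
  set d := f.totalDegree with hd
  set ψ₀ := linearPullback (n+1) (shear c) with hψ₀
  set J₁ := I.map ψ₀.toRingHom with hJ₁
  have hJ₁top : J₁ ≠ ⊤ := by
    intro h
    apply hItop
    have h2 := congrArg (Ideal.comap ψ₀.toRingHom) h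
    rwa [Ideal.comap_map_of_bijective ψ₀.toRingHom (pullback_bijective (shear c)),
      Ideal.comap_top] at h2
  set ρ : MvPolynomial (Fin n) ℂ →+* MvPolynomial (Fin (n+1)) ℂ :=
    (rename (Fin.castSucc : Fin n → Fin (n+1))).toRingHom with hρ
  set I' := J₁.comap ρ with hI'
  have hI'top : I' ≠ ⊤ := by
    intro h
    apply hJ₁top
    rw [Ideal.eq_top_iff_one] at h ⊢
    have h1 : ρ 1 ∈ J₁ := Ideal.mem_comap.mp h
    rwa [map_one] at h1
  obtain ⟨m, hm, L', hinj', hfin'⟩ := ih I' hI'top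
  set ψ' := linearPullback n L' with hψ'
  set L₁ := extEquiv L' with hL₁
  set ψ₁ := linearPullback (n+1) L₁ with hψ₁
  set J₂ := J₁.map ψ₁.toRingHom with hJ₂
  set K' := I'.map ψ'.toRingHom with hK'
  have hsqsymm : (linearPullback (n+1) L₁.symm).toRingHom.comp ρ
      = ρ.comp (linearPullback n L'.symm).toRingHom := by
    have h := pullback_ext_comp_rename L'.symm
    rw [← extEquiv_symm] at h
    exact h
  -- the commuting square for ideals
  have hcm : J₂.comap ρ = K' := by
    have h1 : J₂ = J₁.comap (linearPullback (n+1) L₁.symm).toRingHom :=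
      map_eq_comap_inv (pullback_symm_pullback L₁) (pullback_pullback_symm L₁) J₁
    have h2 : K' = I'.comap (linearPullback n L'.symm).toRingHom :=
      map_eq_comap_inv (pullback_symm_pullback L') (pullback_pullback_symm L') I'
    calc J₂.comap ρ
        = (J₁.comap (linearPullback (n+1) L₁.symm).toRingHom).comap ρ := by rw [← h1]
      _ = J₁.comap ((linearPullback (n+1) L₁.symm).toRingHom.comp ρ) := Ideal.comap_comap _ _
      _ = J₁.comap (ρ.comp (linearPullback n L'.symm).toRingHom) := by rw [hsqsymm]
      _ = (J₁.comap ρ).comap (linearPullback n L'.symm).toRingHom := (Ideal.comap_comap _ _).symm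
      _ = K' := by rw [← hI', ← h2]
  set f₂ := ψ₁ (ψ₀ f) with hf₂def
  have hf₂ : f₂ ∈ J₂ := Ideal.mem_map_of_mem _ (Ideal.mem_map_of_mem _ hfI)
  have hEf₂ : Ee n f₂ = Polynomial.map ψ'.toRingHom (Ee n (ψ₀ f)) := by
    apply polyR_ext
    intro y t
    rw [evalE, Polynomial.map_map]
    have hcmp : (eval y).comp ψ'.toRingHom = eval (L' y) := RingHom.ext fun p => by
      simpa using eval_linearPullback L' p y
    rw [hcmp, evalE, hf₂def, eval_linearPullback, hL₁, extEquiv_snoc]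
  have hdeg₂ : (Ee n f₂).natDegree ≤ d := by
    rw [hEf₂]
    exact Polynomial.natDegree_map_le.trans hnd
  have hco₂ : (Ee n f₂).coeff d = C γ := by
    rw [hEf₂, Polynomial.coeff_map, hcoe]
    show ψ' (C γ) = C γ
    simp [hψ', linearPullback, algebraMap_eq]
  set q := Polynomial.C (C γ⁻¹) * Ee n f₂ with hq
  have hqmonic : q.Monic := by
    have h1 : q.coeff d = 1 := by
      rw [hq, Polynomial.coeff_C_mul, hco₂, ← C_mul, inv_mul_cancel₀ hγ, C_1]
    have h2 : q.natDegree ≤ d := (Polynomial.natDegree_C_mul_le _ _).trans hdeg₂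
    have h3 : d ≤ q.natDegree := Polynomial.le_natDegree_of_ne_zero (by
      rw [h1]; exact one_ne_zero)
    have h4 : q.natDegree = d := le_antisymm h2 h3
    rw [Polynomial.Monic, Polynomial.leadingCoeff, h4, h1]
  have hζq : zeta n q ∈ J₂ := by
    rw [hq, map_mul]
    have hc1 : zeta n (Polynomial.C (C γ⁻¹)) = C γ⁻¹ := by
      rw [zeta, Polynomial.coe_eval₂RingHom, Polynomial.eval₂_C]
      exact rename_C _ _
    rw [hc1, zeta_Ee]
    exact Ideal.mul_mem_left _ _ hf₂
  set g : MvPolynomial (Fin n) ℂ →+* (MvPolynomial (Fin (n+1)) ℂ ⧸ J₂) :=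
    (Ideal.Quotient.mk J₂).comp ρ with hg
  letI : Algebra (MvPolynomial (Fin n) ℂ) (MvPolynomial (Fin (n+1)) ℂ ⧸ J₂) := g.toAlgebra
  have haev : ∀ P : Polynomial (MvPolynomial (Fin n) ℂ),
      Polynomial.aeval ((Ideal.Quotient.mk J₂) (X (Fin.last n))) P
        = (Ideal.Quotient.mk J₂) (zeta n P) := by
    intro P
    rw [Polynomial.aeval_def]
    show Polynomial.eval₂ g _ P = _
    rw [hg, zeta, Polynomial.coe_eval₂RingHom]
    exact (Polynomial.hom_eval₂ P ρ (Ideal.Quotient.mk J₂) (X (Fin.last n))).symm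
  have h0 : Polynomial.aeval ((Ideal.Quotient.mk J₂) (X (Fin.last n))) q = 0 := by
    rw [haev]
    exact Ideal.Quotient.eq_zero_iff_mem.mpr hζq
  set θ := AdjoinRoot.liftAlgHom q (Algebra.ofId _ _) ((Ideal.Quotient.mk J₂) (X (Fin.last n)))
    (by rw [Polynomial.aeval_def] at h0; exact h0) with hθ
  have hθsurj : Function.Surjective θ := by
    intro x
    obtain ⟨s, rfl⟩ := Ideal.Quotient.mk_surjective x
    refine ⟨AdjoinRoot.mk q (Ee n s), ?_⟩
    rw [hθ]
    exact (haev (Ee n s)).trans (by rw [zeta_Ee])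
  haveI hfinAR : Module.Finite (MvPolynomial (Fin n) ℂ) (AdjoinRoot q) :=
    Module.Finite.of_basis (AdjoinRoot.powerBasis' hqmonic).basis
  letI : Module (MvPolynomial (Fin n) ℂ) (MvPolynomial (Fin (n+1)) ℂ ⧸ J₂) := Algebra.toModule
  have hfing : Module.Finite (MvPolynomial (Fin n) ℂ) (MvPolynomial (Fin (n+1)) ℂ ⧸ J₂) :=
    Module.Finite.of_surjective θ.toLinearMap hθsurj
  have hgfin : g.Finite := hfing
  have hcmle : K' ≤ J₂.comap ρ := hcm.ge
  set β := Ideal.quotientMap J₂ ρ hcmle with hβ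
  have hβmk : β.comp (Ideal.Quotient.mk K') = g := Ideal.quotientMap_comp_mk hcmle
  have hβinj : Function.Injective β := Ideal.quotientMap_injective' hcm.le
  have hβfin : β.Finite := RingHom.Finite.of_comp_finite (by rw [hβmk]; exact hgfin)
  refine ⟨m, hm.trans (Nat.le_succ n), L₁.trans (shear c), ?_⟩
  have hIdeal : I.map (linearPullback (n+1) (L₁.trans (shear c))).toRingHom = J₂ := by
    rw [hJ₂, hJ₁, Ideal.map_map]
    refine congrArg (fun φ : MvPolynomial (Fin (n+1)) ℂ →+* MvPolynomial (Fin (n+1)) ℂ => I.map φ) ?_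
    apply RingHom.ext
    intro p
    simp only [RingHom.comp_apply, AlgHom.toRingHom_eq_coe, RingHom.coe_coe]
    exact (pullback_pullback (shear c) L₁ p).symm
  have hhom : (Ideal.Quotient.mk J₂).comp
        (rename (Fin.castLE (hm.trans (Nat.le_succ n)))).toRingHom
      = β.comp ((Ideal.Quotient.mk K').comp (rename (Fin.castLE hm)).toRingHom) := by
    rw [← RingHom.comp_assoc, hβmk, hg, RingHom.comp_assoc]
    congr 1
    apply RingHom.ext
    intro p
    simp only [hρ, RingHom.comp_apply, AlgHom.toRingHom_eq_coe, RingHom.coe_coe]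
    rw [rename_rename]
    have hfun : (Fin.castLE (hm.trans (Nat.le_succ n)))
        = (Fin.castSucc ∘ Fin.castLE hm) := funext fun i => Fin.ext rfl
    rw [hfun]
  suffices key : ∀ J : Ideal (MvPolynomial (Fin (n+1)) ℂ), J = J₂ →
      Function.Injective ((Ideal.Quotient.mk J).comp
        (rename (Fin.castLE (hm.trans (Nat.le_succ n)))).toRingHom) ∧
      ((Ideal.Quotient.mk J).comp
        (rename (Fin.castLE (hm.trans (Nat.le_succ n)))).toRingHom).Finite from key _ hIdeal
  intro J hJ
  subst hJ
  rw [hhom]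
  constructor
  · rw [RingHom.coe_comp]
    exact hβinj.comp hinj'
  · exact RingHom.Finite.comp hβfin hfin'

lemma goal_main : ∀ (N : ℕ) (I : Ideal (MvPolynomial (Fin N) ℂ)), I ≠ ⊤ → Goal N I := by
  intro N
  induction N with
  | zero =>
    intro I hItop
    rcases eq_or_ne I ⊥ with rfl | hIbot
    · exact goal_bot 0
    · exfalso
      obtain ⟨f, hfI, hf0⟩ := Submodule.exists_mem_ne_zero_of_ne_bot hIbot
      obtain ⟨a, rfl⟩ := C_surjective (Fin 0) f
      have ha : a ≠ 0 := fun h => hf0 (by rw [h, C_0])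
      exact hItop (Ideal.eq_top_of_isUnit_mem I hfI
        ((isUnit_iff_ne_zero.mpr ha).map (C : ℂ →+* MvPolynomial (Fin 0) ℂ)))
  | succ n ih =>
    intro I hItop
    rcases eq_or_ne I ⊥ with rfl | hIbot
    · exact goal_bot (n+1)
    · exact goal_step I hItop hIbot ih

end NoetherAux

/-- **Noether normalization for a prime ideal, via a linear change of coordinates.**
If `I` is a prime ideal of `ℂ[z₁,…,z_N]` (the ideal of an irreducible affine variety),
then there are `0 ≤ m ≤ N` and an invertible `ℂ`-linear map `L : ℂ^N → ℂ^N` such that,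
with `J = L*(I) = {p ∘ L : p ∈ I}`, the canonical ring homomorphism
`ℂ[x₁,…,x_m] → ℂ[x₁,…,x_m,y₁,…,y_{N-m}]/J` (induced by viewing the first `m`
coordinates as the `x` variables) is injective and finite. -/
theorem stmt_0 (N : ℕ) (I : Ideal (MvPolynomial (Fin N) ℂ)) (hI : I.IsPrime) :
    ∃ (m : ℕ) (hm : m ≤ N) (L : (Fin N → ℂ) ≃ₗ[ℂ] (Fin N → ℂ)),
      Function.Injective
        ((Ideal.Quotient.mk (I.map (linearPullback N L).toRingHom)).comp
          (MvPolynomial.rename (Fin.castLE hm)).toRingHom) ∧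
      ((Ideal.Quotient.mk (I.map (linearPullback N L).toRingHom)).comp
          (MvPolynomial.rename (Fin.castLE hm)).toRingHom).Finite := by
  exact NoetherAux.goal_main N I hI.ne_top
end

section
/- Let g₁,…,g_{N−m} be polynomials in the variables (x,y) = (x₁,…,x_m, y₁,…,y_{N−m}), where for each j the polynomial g_j has the form g_j(x,y) = y_j^{d_j} − Σ_{k=0}^{d_j−1} g_{jk}(x, y₁,…,y_{j−1}) y_j^k with d_j ≥ 1 and each g_{jk} a polynomial of total degree at most d_j − k. Let V ⊆ ℂ^m × ℂ^{N−m} be the common zero set of g₁,…,g_{N−m}. Then there exists a constant A > 0 such that ‖y‖ ≤ A(1 + ‖x‖) for all (x,y) ∈ V. -/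
/-! The equations `g_j = 0` form a triangular system `y_j^{d_j} = Σ_k g_{jk}(x, y_{<j}) y_j^k`.
If `x` and `y₁,…,y_{j−1}` are `O(1 + ‖x‖)`, the degree bound `deg g_{jk} ≤ d_j − k` makes the
coefficient of `y_j^k` of size `O((1 + ‖x‖)^{d_j−k})`, and the Cauchy-type root bound
`|z| ≤ d C M` for `z^d = Σ a_k z^k`, `|a_k| ≤ C M^{d−k}` gives `y_j = O(1 + ‖x‖)`. -/

open MvPolynomial

/-- The Euclidean norm of a vector in `ℂ^ι`. -/
noncomputable def eucNorm {ι : Type*} [Fintype ι] (x : ι → ℂ) : ℝ :=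
  Real.sqrt (∑ i, ‖x i‖ ^ 2)

/-- The polynomials `g₁,…,g_s` in the variables `(x,y) = (x₁,…,x_m,y₁,…,y_s)` have the
shape of defining polynomials of a Noether presentation:
`g_j = y_j^{d_j} − Σ_{k<d_j} g_{jk}(x,y₁,…,y_{j−1}) y_j^k` with `d_j ≥ 1` and
`deg g_{jk} ≤ d_j − k`. -/
def NoetherForm (m s : ℕ) (g : Fin s → MvPolynomial (Fin m ⊕ Fin s) ℂ)
    (d : Fin s → ℕ) : Prop :=
  ∀ j : Fin s, 1 ≤ d j ∧
    ∃ c : ℕ → MvPolynomial (Fin m ⊕ Fin s) ℂ,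
      (∀ k < d j, (c k).totalDegree ≤ d j - k) ∧
      (∀ k < d j, ∀ v ∈ (c k).vars, ∀ j' : Fin s, v = Sum.inr j' → j' < j) ∧
      g j = X (Sum.inr j) ^ (d j) - ∑ k ∈ Finset.range (d j), c k * X (Sum.inr j) ^ k

theorem MvPolynomial.norm_eval_le_of_forall_vars {K σ : Type*} [NormedField K]
    (p : MvPolynomial σ K) {v : σ → K} {M : ℝ} (hM : 1 ≤ M)
    (hv : ∀ i ∈ p.vars, ‖v i‖ ≤ M) :
    ‖eval v p‖ ≤ (∑ e ∈ p.support, ‖p.coeff e‖) * M ^ p.totalDegree := by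
  rw [eval_eq, Finset.sum_mul]
  refine (norm_sum_le _ _).trans (Finset.sum_le_sum fun e he => ?_)
  rw [norm_mul, norm_prod]
  gcongr
  calc ∏ i ∈ e.support, ‖v i ^ e i‖
      ≤ ∏ i ∈ e.support, M ^ e i := by
        gcongr with i hi
        rw [norm_pow]
        gcongr
        exact hv i ((mem_vars_iff_mem_support i).mpr ⟨e, he, hi⟩)
    _ = M ^ (e.sum fun _ n => n) := by rw [Finset.prod_pow_eq_pow_sum]; rfl
    _ ≤ M ^ p.totalDegree := pow_le_pow_right₀ hM (le_totalDegree he)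

theorem norm_le_of_pow_eq_sum {K : Type*} [NormedField K] {d : ℕ} {z : K} {a : ℕ → K}
    {C M : ℝ} (hC : 1 ≤ C) (hM : 0 ≤ M) (ha : ∀ k < d, ‖a k‖ ≤ C * M ^ (d - k))
    (hz : z ^ d = ∑ k ∈ Finset.range d, a k * z ^ k) :
    ‖z‖ ≤ d * C * M := by
  obtain rfl | hd := Nat.eq_zero_or_pos d
  · simp at hz
  have hd' : (1 : ℝ) ≤ d := by exact_mod_cast hd
  rcases le_or_gt ‖z‖ M with hzM | hzM
  · nlinarith [mul_le_mul hd' hC zero_le_one (by linarith)]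
  have hz0 : 0 < ‖z‖ := hM.trans_lt hzM
  have hterm : ∀ k < d, ‖a k * z ^ k‖ ≤ C * M * ‖z‖ ^ (d - 1) := fun k hk => calc
    ‖a k * z ^ k‖ ≤ C * M ^ (d - k) * ‖z‖ ^ k := by
      rw [norm_mul, norm_pow]; gcongr; exact ha k hk
    _ = C * M * (M ^ (d - 1 - k) * ‖z‖ ^ k) := by
      rw [show d - k = d - 1 - k + 1 by omega, pow_succ]; ring
    _ ≤ C * M * (‖z‖ ^ (d - 1 - k) * ‖z‖ ^ k) := by gcongr
    _ = C * M * ‖z‖ ^ (d - 1) := by rw [← pow_add, show d - 1 - k + k = d - 1 by omega]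
  have key : ‖z‖ * ‖z‖ ^ (d - 1) ≤ d * C * M * ‖z‖ ^ (d - 1) := calc
    ‖z‖ * ‖z‖ ^ (d - 1) = ‖z ^ d‖ := by rw [← pow_succ', norm_pow, Nat.sub_add_cancel hd]
    _ ≤ ∑ k ∈ Finset.range d, ‖a k * z ^ k‖ := hz ▸ norm_sum_le _ _
    _ ≤ ∑ k ∈ Finset.range d, C * M * ‖z‖ ^ (d - 1) :=
      Finset.sum_le_sum fun k hk => hterm k (Finset.mem_range.mp hk)
    _ = d * C * M * ‖z‖ ^ (d - 1) := by
      rw [Finset.sum_const, Finset.card_range, nsmul_eq_mul]; ring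
  exact le_of_mul_le_mul_right key (by positivity)

theorem exists_norm_le_of_pow_eq_sum_eval {K σ : Type*} [NormedField K] (d : ℕ)
    (c : ℕ → MvPolynomial σ K) (hdeg : ∀ k < d, (c k).totalDegree ≤ d - k) :
    ∃ C : ℝ, ∀ (v : σ → K) (M : ℝ) (z : K), 1 ≤ M →
      (∀ k < d, ∀ i ∈ (c k).vars, ‖v i‖ ≤ M) →
      z ^ d = ∑ k ∈ Finset.range d, eval v (c k) * z ^ k → ‖z‖ ≤ C * M := by
  set S : ℕ → ℝ := fun k => ∑ e ∈ (c k).support, ‖(c k).coeff e‖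
  have hS : ∀ k, 0 ≤ S k := fun k => by positivity
  refine ⟨d * (1 + ∑ k ∈ Finset.range d, S k), fun v M z hM hv hz => ?_⟩
  refine norm_le_of_pow_eq_sum (a := fun k => eval v (c k))
    (le_add_of_nonneg_right (Finset.sum_nonneg fun k _ => hS k)) (by linarith)
    (fun k hk => ?_) hz
  calc ‖eval v (c k)‖ ≤ S k * M ^ (c k).totalDegree :=
        (c k).norm_eval_le_of_forall_vars hM (hv k hk)
    _ ≤ (1 + ∑ k ∈ Finset.range d, S k) * M ^ (d - k) := by
        gcongr
        · exact (Finset.single_le_sum (fun k _ => hS k) (Finset.mem_range.mpr hk)).trans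
            (le_add_of_nonneg_left zero_le_one)
        · exact hdeg k hk

theorem norm_le_eucNorm {ι : Type*} [Fintype ι] (x : ι → ℂ) (i : ι) : ‖x i‖ ≤ eucNorm x := by
  rw [eucNorm, ← Real.sqrt_sq (norm_nonneg (x i))]
  exact Real.sqrt_le_sqrt
    (Finset.single_le_sum (f := fun j => ‖x j‖ ^ 2) (fun j _ => by positivity) (Finset.mem_univ i))

theorem eucNorm_le_sqrt_card_mul {ι : Type*} [Fintype ι] {x : ι → ℂ} {r : ℝ} (hr : 0 ≤ r)
    (hx : ∀ i, ‖x i‖ ≤ r) : eucNorm x ≤ √(Fintype.card ι) * r := calc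
  eucNorm x ≤ √(∑ _i : ι, r ^ 2) :=
    Real.sqrt_le_sqrt (Finset.sum_le_sum fun i _ => by gcongr; exact hx i)
  _ = √(Fintype.card ι) * r := by
    rw [Finset.sum_const, Finset.card_univ, nsmul_eq_mul, Real.sqrt_mul (Nat.cast_nonneg _),
      Real.sqrt_sq hr]

theorem NoetherForm.exists_linear_bound_of_lt {m s : ℕ} {g : Fin s → MvPolynomial (Fin m ⊕ Fin s) ℂ}
    {d : Fin s → ℕ} (hg : NoetherForm m s g d) (n : ℕ) :
    ∃ B ≥ (1 : ℝ), ∀ (x : Fin m → ℂ) (y : Fin s → ℂ), (∀ j, eval (Sum.elim x y) (g j) = 0) →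
      ∀ j : Fin s, (j : ℕ) < n → ‖y j‖ ≤ B * (1 + eucNorm x) := by
  induction n with
  | zero => exact ⟨1, le_rfl, fun _ _ _ _ hj => absurd hj (Nat.not_lt_zero _)⟩
  | succ n ih =>
    obtain ⟨B, hB, hbound⟩ := ih
    by_cases hns : s ≤ n
    · exact ⟨B, hB, fun x y hxy j _ => hbound x y hxy j (by omega)⟩
    set jn : Fin s := ⟨n, by omega⟩
    obtain ⟨-, c, hdeg, hvars, hgj⟩ := hg jn
    obtain ⟨C, hC⟩ := exists_norm_le_of_pow_eq_sum_eval (d jn) c hdeg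
    refine ⟨max B (C * B), le_max_of_le_left hB, fun x y hxy j hj => ?_⟩
    have hx : 0 ≤ eucNorm x := Real.sqrt_nonneg _
    rcases Nat.lt_succ_iff_lt_or_eq.mp hj with hj | hj
    · exact (hbound x y hxy j hj).trans (by gcongr; exact le_max_left _ _)
    rw [show j = jn from Fin.ext hj]
    have hroot : y jn ^ d jn = ∑ k ∈ Finset.range (d jn), eval (Sum.elim x y) (c k) * y jn ^ k := by
      simpa [hgj, sub_eq_zero] using hxy jn
    have hvarsB : ∀ k < d jn, ∀ i ∈ (c k).vars, ‖Sum.elim x y i‖ ≤ B * (1 + eucNorm x) := by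
      rintro k hk (i | i) hi
      · calc ‖x i‖ ≤ 1 * (1 + eucNorm x) := by linarith [norm_le_eucNorm x i]
          _ ≤ B * (1 + eucNorm x) := by gcongr
      · exact hbound x y hxy i (hvars k hk _ hi i rfl)
    calc ‖y jn‖ ≤ C * (B * (1 + eucNorm x)) :=
          hC _ _ _ (one_le_mul_of_one_le_of_one_le hB (by linarith)) hvarsB hroot
      _ ≤ max B (C * B) * (1 + eucNorm x) := by
          rw [← mul_assoc]; gcongr; exact le_max_right _ _

/-- **Linear growth bound from a Noether presentation.** If `V ⊆ ℂ^m × ℂ^s` is the common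
zero set of polynomials `g₁,…,g_s` in Noether form, then there is `A > 0` with
`‖y‖ ≤ A(1 + ‖x‖)` for all `(x,y) ∈ V`. -/
theorem stmt_3 (m s : ℕ) (g : Fin s → MvPolynomial (Fin m ⊕ Fin s) ℂ)
    (d : Fin s → ℕ) (hg : NoetherForm m s g d) :
    ∃ A > 0, ∀ (x : Fin m → ℂ) (y : Fin s → ℂ),
      (∀ j, eval (Sum.elim x y) (g j) = 0) → eucNorm y ≤ A * (1 + eucNorm x) := by
  obtain ⟨B, hB, hbound⟩ := hg.exists_linear_bound_of_lt s
  refine ⟨(1 + √s) * B, by positivity, fun x y hxy => ?_⟩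
  have hx : 0 ≤ eucNorm x := Real.sqrt_nonneg _
  calc eucNorm y ≤ √(Fintype.card (Fin s)) * (B * (1 + eucNorm x)) :=
        eucNorm_le_sqrt_card_mul (by positivity) fun j => hbound x y hxy j j.isLt
    _ ≤ (1 + √s) * B * (1 + eucNorm x) := by
        rw [Fintype.card_fin, ← mul_assoc]; gcongr; linarith
end

section
/- Let p ∈ ℂ[x₁,…,x_m] be a polynomial of total degree D ≥ 1 with leading homogeneous part p̂, and suppose that the set { x ∈ ℂ^m : p̂(x) = x₂ = ⋯ = x_m = 0 } consists only of the origin. Fix an integer j ≥ 1 and define u_j(x) := max{ (1/D)·log|p(x)|, log(|x₂|/j), …, log(|x_m|/j), −log j }. Then there exist constants c ≤ C such that log⁺‖x‖ + c ≤ u_j(x) ≤ log⁺‖x‖ + C for all x ∈ ℂ^m; that is, u_j belongs to the class 𝓛⁺(ℂ^m). -/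
open MvPolynomial

/-- `log⁺ t = max (log t) 0`. -/
noncomputable def logPlus (t : ℝ) : ℝ := max (Real.log t) 0

/-- The function `u_j(x) = max{ (1/D)·log|p(x)|, log(|x₂|/j), …, log(|x_m|/j), −log j }`
(the maximum of a finite nonempty collection, expressed as a supremum). -/
noncomputable def uj (m : ℕ) (p : MvPolynomial (Fin m) ℂ) (D j : ℕ)
    (x : Fin m → ℂ) : ℝ :=
  sSup (insert ((1 / (D : ℝ)) * Real.log (‖eval x p‖))
    (insert (-Real.log (j : ℝ))
      {t : ℝ | ∃ i : Fin m, (i : ℕ) ≠ 0 ∧ t = Real.log (‖x i‖ / (j : ℝ))}))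

/-! The upper bound holds term by term, since `|p(x)| ≤ A · max(1, ‖x‖)^D` and `|x_i| / j ≤ ‖x‖`.
For the lower bound, the hypothesis on `p̂` makes `|p̂(ω)| + max_{i ≥ 2} |ω_i|` positive on the unit
sphere, hence at least some `κ > 0` there by compactness. By homogeneity every `x` then satisfies
`|p̂(x)| ≥ κ‖x‖^D` or `|x_i| ≥ κ‖x‖` for some `i ≥ 2`; as `p - p̂` has degree `< D`, the first
alternative passes to `p` once `‖x‖` is large, and for bounded `‖x‖` the term `-log j` suffices. -/

open Real

lemma logPlus_eq_posLog (t : ℝ) : logPlus t = log⁺ t := max_comm _ _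

lemma eucNorm_eq_norm_toLp {ι : Type*} [Fintype ι] (x : ι → ℂ) :
    eucNorm x = ‖WithLp.toLp 2 x‖ := by
  simp [eucNorm, EuclideanSpace.norm_eq]

lemma uj_le_iff {m : ℕ} {p : MvPolynomial (Fin m) ℂ} {D j : ℕ} {x : Fin m → ℂ} {b : ℝ} :
    uj m p D j x ≤ b ↔ 1 / (D : ℝ) * log ‖eval x p‖ ≤ b ∧ -log j ≤ b ∧
      ∀ i : Fin m, (i : ℕ) ≠ 0 → log (‖x i‖ / j) ≤ b := by
  have hfin : {t : ℝ | ∃ i : Fin m, (i : ℕ) ≠ 0 ∧ t = log (‖x i‖ / j)}.Finite :=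
    (Set.finite_range fun i : Fin m => log (‖x i‖ / j)).subset
      (by rintro _ ⟨i, -, rfl⟩; exact ⟨i, rfl⟩)
  rw [uj, csSup_le_iff ((hfin.insert _).insert _).bddAbove (Set.insert_nonempty _ _)]
  simp only [Set.forall_mem_insert, Set.mem_ofPred_eq, forall_exists_index, and_imp]
  exact and_congr_right' <| and_congr_right'
    ⟨fun h i hi => h _ i hi rfl, fun h _ i hi ht => ht ▸ h i hi⟩

namespace MvPolynomial

variable {σ R : Type*}

theorem IsHomogeneous.eval_smul [CommSemiring R] {φ : MvPolynomial σ R} {n : ℕ}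
    (hφ : φ.IsHomogeneous n) (c : R) (x : σ → R) :
    eval (c • x) φ = c ^ n * eval x φ := by
  rw [eval_eq, eval_eq, Finset.mul_sum]
  refine Finset.sum_congr rfl fun d hd => ?_
  simp only [Pi.smul_apply, smul_eq_mul, mul_pow, Finset.prod_mul_distrib,
    Finset.prod_pow_eq_pow_sum, ← hφ.degree_eq_sum_deg_support hd]
  ring

theorem totalDegree_sub_homogeneousComponent_le [CommRing R] {p : MvPolynomial σ R} {n : ℕ}
    (hp : p.totalDegree ≤ n) : (p - homogeneousComponent n p).totalDegree ≤ n - 1 := by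
  refine Finset.sup_le fun d hd => ?_
  rw [mem_support_iff, coeff_sub, coeff_homogeneousComponent] at hd
  split_ifs at hd with hdn
  · simp at hd
  · have hle : (d.sum fun _ e => e) ≤ p.totalDegree :=
      le_totalDegree (mem_support_iff.mpr (by simpa using hd))
    change d.degree ≤ p.totalDegree at hle
    change d.degree ≤ n - 1
    omega

theorem norm_eval_le_of_forall_norm_le {𝕜 : Type*} [NormedField 𝕜] (f : MvPolynomial σ 𝕜)
    {x : σ → 𝕜} {s : ℝ} (hs : 1 ≤ s) (hx : ∀ i, ‖x i‖ ≤ s) :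
    ‖eval x f‖ ≤ (∑ d ∈ f.support, ‖coeff d f‖) * s ^ f.totalDegree := by
  rw [eval_eq, Finset.sum_mul]
  refine (norm_sum_le _ _).trans (Finset.sum_le_sum fun d hd => ?_)
  rw [norm_mul, norm_prod]
  gcongr
  calc ∏ i ∈ d.support, ‖x i ^ d i‖ ≤ ∏ i ∈ d.support, s ^ d i := by
        gcongr with i; rw [norm_pow]; exact pow_le_pow_left₀ (norm_nonneg _) (hx i) _
    _ = s ^ (d.sum fun _ e => e) := Finset.prod_pow_eq_pow_sum _ _ _
    _ ≤ s ^ f.totalDegree := pow_le_pow_right₀ hs (le_totalDegree hd)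

end MvPolynomial

theorem exists_pos_forall_mul_norm_pow_le_or_mul_norm_le {𝕜 E F : Type*} [RCLike 𝕜]
    [NormedAddCommGroup E] [NormedSpace 𝕜 E] [FiniteDimensional 𝕜 E]
    [NormedAddCommGroup F] [NormedSpace 𝕜 F]
    {φ : E → 𝕜} {n : ℕ} (hφ : Continuous φ) (hφ_smul : ∀ (c : 𝕜) x, φ (c • x) = c ^ n * φ x)
    (L : E →L[𝕜] F) (hzero : ∀ x, φ x = 0 → L x = 0 → x = 0) :
    ∃ κ > 0, ∀ x, κ * ‖x‖ ^ n ≤ ‖φ x‖ ∨ κ * ‖x‖ ≤ ‖L x‖ := by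
  have := FiniteDimensional.proper_rclike 𝕜 E
  obtain ⟨δ, hδ, hδle⟩ := (isCompact_sphere (0 : E) 1).exists_forall_le' (a := 0)
    (f := fun ω => ‖φ ω‖ + ‖L ω‖) (by fun_prop) fun ω hω => by
      by_contra! h
      have hω0 : ω = 0 := hzero ω (norm_le_zero_iff.mp (by linarith [norm_nonneg (L ω)]))
        (norm_le_zero_iff.mp (by linarith [norm_nonneg (φ ω)]))
      simp [hω0] at hω
  refine ⟨δ / 2, half_pos hδ, fun x => ?_⟩
  rcases eq_or_ne x 0 with rfl | hx
  · simp
  set ω : E := (‖x‖ : 𝕜)⁻¹ • x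
  have hxω : x = (‖x‖ : 𝕜) • ω := by
    rw [smul_inv_smul₀ (RCLike.ofReal_ne_zero.mpr (norm_ne_zero_iff.mpr hx))]
  have hω : ω ∈ Metric.sphere (0 : E) 1 := by
    simp [ω, norm_smul, norm_ne_zero_iff.mpr hx]
  have hφx : ‖φ x‖ = ‖x‖ ^ n * ‖φ ω‖ := by
    conv_lhs => rw [hxω]
    simp [hφ_smul]
  have hLx : ‖L x‖ = ‖x‖ * ‖L ω‖ := by
    conv_lhs => rw [hxω]
    simp [norm_smul]
  rw [hφx, hLx]
  have hδω := hδle ω hω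
  by_cases h : δ / 2 ≤ ‖φ ω‖
  · left; rw [mul_comm]; gcongr
  · right; rw [mul_comm]; gcongr; linarith

theorem exists_pos_forall_mul_norm_pow_le_norm_eval_or {𝕜 ι : Type*} [RCLike 𝕜] [Fintype ι]
    {p : MvPolynomial ι 𝕜} {D : ℕ} (hD : 1 ≤ D) (hdeg : p.totalDegree ≤ D) {s : Set ι}
    (hzero : ∀ x : ι → 𝕜, eval x (homogeneousComponent D p) = 0 → (∀ i ∈ s, x i = 0) → x = 0) :
    ∃ κ > 0, ∃ R ≥ 1, ∀ x : EuclideanSpace 𝕜 ι, R ≤ ‖x‖ →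
      κ * ‖x‖ ^ D ≤ ‖eval x.ofLp p‖ ∨ ∃ i ∈ s, κ * ‖x‖ ≤ ‖x i‖ := by
  set P := homogeneousComponent D p
  have : Fintype s := Fintype.ofFinite s
  -- sup norm on the target, so that a lower bound for `‖L x‖` is attained at one coordinate
  let L : EuclideanSpace 𝕜 ι →L[𝕜] (s → 𝕜) :=
    ContinuousLinearMap.pi fun i => EuclideanSpace.proj (i : ι)
  obtain ⟨κ, hκ, hdom⟩ := exists_pos_forall_mul_norm_pow_le_or_mul_norm_le
    (φ := fun x : EuclideanSpace 𝕜 ι => eval x.ofLp P)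
    ((continuous_eval P).comp (PiLp.continuous_ofLp 2 _))
    (fun c x => (homogeneousComponent_isHomogeneous D p).eval_smul c x.ofLp) L
    fun x hP hL => by
      simpa using congrArg (WithLp.toLp 2) (hzero x.ofLp hP fun i hi => congrFun hL ⟨i, hi⟩)
  set q := p - P
  set C := ∑ d ∈ q.support, ‖coeff d q‖
  refine ⟨κ / 2, half_pos hκ, max 1 (2 * C / κ), le_max_left _ _, fun x hx => ?_⟩
  have hx1 : 1 ≤ ‖x‖ := (le_max_left _ _).trans hx
  have hCx : 2 * C ≤ κ * ‖x‖ := by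
    rw [mul_comm κ, ← div_le_iff₀ hκ]; exact (le_max_right _ _).trans hx
  rcases hdom x with h | h
  · left
    have hq : ‖eval x.ofLp q‖ ≤ C * ‖x‖ ^ (D - 1) :=
      (norm_eval_le_of_forall_norm_le q hx1 (PiLp.norm_apply_le x)).trans <| by
        gcongr; exact totalDegree_sub_homogeneousComponent_le hdeg
    have hsplit : eval x.ofLp P = eval x.ofLp p - eval x.ofLp q := by simp [q]
    have hpow : ‖x‖ ^ D = ‖x‖ * ‖x‖ ^ (D - 1) := by rw [← pow_succ']; congr 1; omega
    calc κ / 2 * ‖x‖ ^ D ≤ κ * ‖x‖ ^ D - C * ‖x‖ ^ (D - 1) := by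
          rw [hpow]; nlinarith [pow_nonneg (norm_nonneg x) (D - 1)]
      _ ≤ ‖eval x.ofLp P‖ - ‖eval x.ofLp q‖ := by linarith
      _ ≤ ‖eval x.ofLp p‖ := by
          rw [hsplit]; linarith [norm_sub_le (eval x.ofLp p) (eval x.ofLp q)]
  · right
    by_contra! hlt
    have hLx : ‖L x‖ < κ / 2 * ‖x‖ :=
      (pi_norm_lt_iff (by positivity)).mpr fun i => hlt i i.2
    linarith [mul_pos hκ (one_pos.trans_le hx1)]

section uj

variable {m : ℕ} {p : MvPolynomial (Fin m) ℂ} {D j : ℕ}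

theorem exists_uj_le_logPlus_add (hD : 1 ≤ D) (hdeg : p.totalDegree ≤ D) (hj : 1 ≤ j) :
    ∃ C, ∀ x, uj m p D j x ≤ logPlus (eucNorm x) + C := by
  set A := ∑ d ∈ p.support, ‖coeff d p‖
  have hD0 : (0 : ℝ) < D := by exact_mod_cast hD
  refine ⟨log⁺ A / D, fun x => ?_⟩
  rw [logPlus_eq_posLog, eucNorm_eq_norm_toLp]
  set r := ‖WithLp.toLp 2 x‖
  have hC : 0 ≤ log⁺ A / D := div_nonneg posLog_nonneg hD0.le
  have hM : log⁺ (max 1 r) = log⁺ r := by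
    rw [posLog_eq_log_max_one (norm_nonneg _),
      posLog_eq_log ((le_max_left 1 r).trans (le_abs_self _))]
  have hcoord (i : Fin m) : ‖x i‖ ≤ r := PiLp.norm_apply_le (WithLp.toLp 2 x) i
  refine uj_le_iff.mpr ⟨?_, ?_, fun i _ => ?_⟩
  · have hp : ‖eval x p‖ ≤ A * max 1 r ^ D :=
      (norm_eval_le_of_forall_norm_le p (le_max_left _ _)
        fun i => (hcoord i).trans (le_max_right _ _)).trans (by gcongr; exact le_max_left _ _)
    calc 1 / (D : ℝ) * log ‖eval x p‖
        ≤ 1 / D * (log⁺ A + D * log⁺ (max 1 r)) := by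
          gcongr
          calc log ‖eval x p‖ ≤ log⁺ ‖eval x p‖ := le_max_right _ _
            _ ≤ log⁺ (A * max 1 r ^ D) := posLog_le_posLog (norm_nonneg _) hp
            _ ≤ log⁺ A + D * log⁺ (max 1 r) := by grw [posLog_mul, posLog_pow]
      _ = log⁺ r + log⁺ A / D := by rw [hM]; field_simp; ring
  · linarith [log_nonneg (show (1 : ℝ) ≤ j by exact_mod_cast hj), posLog_nonneg (x := r)]
  · calc log (‖x i‖ / j) ≤ log⁺ (‖x i‖ / j) := le_max_right _ _
      _ ≤ log⁺ r := posLog_le_posLog (by positivity)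
          ((div_le_self (norm_nonneg _) (by exact_mod_cast hj)).trans (hcoord i))
      _ ≤ log⁺ r + log⁺ A / D := le_add_of_nonneg_right hC

theorem exists_logPlus_add_le_uj (hD : 1 ≤ D) (hdeg : p.totalDegree ≤ D)
    (hzero : ∀ x : Fin m → ℂ,
      eval x (homogeneousComponent D p) = 0 →
        (∀ i : Fin m, (i : ℕ) ≠ 0 → x i = 0) → x = 0) (hj : 1 ≤ j) :
    ∃ c, ∀ x, logPlus (eucNorm x) + c ≤ uj m p D j x := by
  obtain ⟨κ, hκ, R, hR, hdom⟩ :=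
    exists_pos_forall_mul_norm_pow_le_norm_eval_or hD hdeg (s := {i | (i : ℕ) ≠ 0}) hzero
  have hD0 : (0 : ℝ) < D := by exact_mod_cast hD
  have hj0 : (0 : ℝ) < j := by exact_mod_cast hj
  obtain ⟨c, hc₁, hc₂, hc₃⟩ :
      ∃ c : ℝ, c ≤ -log j - log R ∧ c ≤ log κ / D ∧ c ≤ log κ - log j :=
    ⟨min _ (min _ _), min_le_left _ _, (min_le_right _ _).trans (min_le_left _ _),
      (min_le_right _ _).trans (min_le_right _ _)⟩
  refine ⟨c, fun x => ?_⟩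
  rw [logPlus_eq_posLog, eucNorm_eq_norm_toLp]
  set r := ‖WithLp.toLp 2 x‖
  obtain ⟨hpoly, hconst, hcoord⟩ := uj_le_iff.mp (le_refl (uj m p D j x))
  rcases le_or_gt r R with hrR | hRr
  · have : log⁺ r ≤ log R := (posLog_le_posLog (norm_nonneg _) hrR).trans_eq
      (posLog_eq_log (hR.trans (le_abs_self R)))
    linarith
  have hr0 : 0 < r := by linarith
  rw [posLog_eq_log (hR.trans (hRr.le.trans (le_abs_self r)))]
  rcases hdom _ hRr.le with h | ⟨i, hi, h⟩
  · calc log r + c ≤ 1 / D * log (κ * r ^ D) := by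
          rw [log_mul hκ.ne' (by positivity), log_pow, mul_add, ← mul_assoc,
            one_div_mul_cancel hD0.ne', one_mul, add_comm, one_div_mul_eq_div]
          gcongr
      _ ≤ 1 / D * log ‖eval x p‖ := by gcongr
      _ ≤ _ := hpoly
  · calc log r + c ≤ log (κ * r / j) := by
          rw [log_div (by positivity) hj0.ne', log_mul hκ.ne' hr0.ne']; linarith
      _ ≤ log (‖x i‖ / j) := log_le_log (by positivity) (by gcongr)
      _ ≤ _ := hcoord i hi

end uj

/-- **The auxiliary functions `u_j` belong to `𝓛⁺(ℂ^m)`.** Suppose `p ∈ ℂ[x₁,…,x_m]` has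
total degree `D ≥ 1`, and the common zero set of its leading homogeneous part `p̂` and of
`x₂,…,x_m` consists only of the origin.  Then for each integer `j ≥ 1` the function
`u_j(x) = max{(1/D)log|p(x)|, log(|x₂|/j), …, log(|x_m|/j), −log j}` satisfies
`log⁺‖x‖ + c ≤ u_j(x) ≤ log⁺‖x‖ + C` on `ℂ^m` for some constants `c ≤ C`. -/
theorem stmt_11 (m : ℕ) (p : MvPolynomial (Fin m) ℂ) (D : ℕ) (hD : 1 ≤ D)
    (hdeg : p.totalDegree = D)
    (hzero : {x : Fin m → ℂ | eval x (homogeneousComponent D p) = 0 ∧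
        ∀ i : Fin m, (i : ℕ) ≠ 0 → x i = 0} ⊆ {0})
    (j : ℕ) (hj : 1 ≤ j) :
    ∃ c C : ℝ, c ≤ C ∧ ∀ x : Fin m → ℂ,
      logPlus (eucNorm x) + c ≤ uj m p D j x ∧
      uj m p D j x ≤ logPlus (eucNorm x) + C := by
  obtain ⟨c, hc⟩ := exists_logPlus_add_le_uj hD hdeg.le (fun x hP hx => hzero ⟨hP, hx⟩) hj
  obtain ⟨C, hC⟩ := exists_uj_le_logPlus_add hD hdeg.le hj
  exact ⟨min c C, C, min_le_right _ _, fun x =>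
    ⟨(add_le_add_right (min_le_left _ _) _).trans (hc x), hC x⟩⟩
end
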